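/- Let Δ₁ = [x,y] and Δ₂ = [z,w] be linked segments with Δ₁ preceding Δ₂ (so z - x is a positive integer), and let Δ = Δ₁ ∪ Δ₂ = [x,w]. If a segment Δ' = [r,s] (with endpoints differing from x by integers) is linked with Δ, then Δ' is linked with Δ₁ or linked with Δ₂. -/
import Mathlib


/-- A segment `[a, b]` of consecutive real numbers: `b - a` is a nonnegative integer. -/
def IsSeg (a b : ℝ) : Prop := ∃ k : ℕ, b = a + k

/-- Segments `[a,b]` and `[c,d]` are linked:
`a - c ∈ ℤ` and ((`a < c` and `c - 1 ≤ b < d`) or (`c ≤ a ≤ d + 1` and `d < b`)). -/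
def Linked (a b c d : ℝ) : Prop :=
  (∃ m : ℤ, a - c = (m : ℝ)) ∧
  ((a < c ∧ c - 1 ≤ b ∧ b < d) ∨ (c ≤ a ∧ a ≤ d + 1 ∧ d < b))

/-- `[a,b]` precedes `[c,d]` if they are linked and `c - a` is a positive integer. -/
def Precedes (a b c d : ℝ) : Prop :=
  Linked a b c d ∧ ∃ k : ℤ, 0 < k ∧ c - a = (k : ℝ)

/-- If `Δ₁ = [x,y]` precedes `Δ₂ = [z,w]` and a segment `Δ' = [r,s]`
(with `r - x ∈ ℤ`) is linked with the union `Δ = [x,w]`, then `Δ'` is linked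
with `Δ₁` or with `Δ₂`. -/
theorem linked_with_union (x y z w r s : ℝ)
    (hxy : IsSeg x y) (hzw : IsSeg z w) (hrs : IsSeg r s)
    (hprec : Precedes x y z w)
    (hint : ∃ m : ℤ, r - x = (m : ℝ))
    (hlink : Linked r s x w) :
    Linked r s x y ∨ Linked r s z w := by
  obtain ⟨hlk12, k, hk, hzx⟩ := hprec
  obtain ⟨_, hcases12⟩ := hlk12
  obtain ⟨_, hcases⟩ := hlink
  obtain ⟨mr, hmr⟩ := hint
  have hkpos : (0:ℝ) < (k:ℝ) := by exact_mod_cast hk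
  have hxz : x < z := by linarith
  have hrz : r - z = ((mr - k : ℤ) : ℝ) := by push_cast; linarith
  rcases hcases12 with ⟨_, hzy, hyw⟩ | ⟨hzx', _⟩
  · rcases hcases with ⟨hrx, hxs, hsw⟩ | ⟨hxr, hrw1, hws⟩
    · by_cases hsy : s < y
      · exact Or.inl ⟨⟨mr, hmr⟩, Or.inl ⟨hrx, by linarith, hsy⟩⟩
      · exact Or.inr ⟨⟨mr - k, hrz⟩, Or.inl ⟨by linarith, by linarith, hsw⟩⟩
    · by_cases hzr : z ≤ r
      · exact Or.inr ⟨⟨mr - k, hrz⟩, Or.inr ⟨hzr, hrw1, hws⟩⟩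
      · push_neg at hzr
        have h1 : mr - k ≤ -1 := by
          by_contra h
          push_neg at h
          have h0 : (0:ℤ) ≤ mr - k := by omega
          have : (0:ℝ) ≤ r - z := by rw [hrz]; exact_mod_cast h0
          linarith
        have h2 : ((mr - k : ℤ) : ℝ) ≤ -1 := by exact_mod_cast h1
        have : r ≤ z - 1 := by linarith [hrz ▸ h2]
        exact Or.inl ⟨⟨mr, hmr⟩, Or.inr ⟨hxr, by linarith, by linarith⟩⟩
  · linarith
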